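/- Let G = (V,E) be a finite simple graph, let D be a liar's dominating set of G, and let S ⊆ V. Define S' = {u ∈ V : δ_G(u,v) ≤ 2 for some v ∈ S}. Then D ∩ S' is a liar's dominating set of S in G. -/

import Mathlib

/-- Closed neighborhood of a vertex: the vertex together with its neighbors. -/
def closedNbhd {V : Type*} (G : SimpleGraph V) (v : V) : Set V :=
  {u | u = v ∨ G.Adj u v}

/-- `D` is a liar's dominating set of the vertex subset `A` in `G`. -/
def IsLDSOn {V : Type*} (G : SimpleGraph V) (A D : Set V) : Prop :=
  (∀ v ∈ A, 2 ≤ (closedNbhd G v ∩ D).ncard) ∧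
  (∀ u ∈ A, ∀ v ∈ A, u ≠ v →
    3 ≤ ((closedNbhd G u ∪ closedNbhd G v) ∩ D).ncard)

/-- `D` is a liar's dominating set of `G`. -/
def IsLDS {V : Type*} (G : SimpleGraph V) (D : Set V) : Prop :=
  IsLDSOn G Set.univ D

/-- `I` is an independent set of `G`. -/
def IsIndepSet {V : Type*} (G : SimpleGraph V) (I : Set V) : Prop :=
  ∀ u ∈ I, ∀ v ∈ I, u ≠ v → ¬ G.Adj u v

/-- `I` is a maximal independent set of the subgraph of `G` induced on `A`. -/
def IsMaxIndepOn {V : Type*} (G : SimpleGraph V) (A I : Set V) : Prop :=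
  I ⊆ A ∧ IsIndepSet G I ∧
    ∀ J, J ⊆ A → IsIndepSet G J → I ⊆ J → I = J

/-- `I` is a maximal independent set of `G`. -/
def IsMaxIndep {V : Type*} (G : SimpleGraph V) (I : Set V) : Prop :=
  IsMaxIndepOn G Set.univ I

/-- The unit disk graph on a finite set `P` of points in the plane: two distinct
points are adjacent iff their Euclidean distance is at most 1. -/
def unitDiskGraph (P : Finset (EuclideanSpace ℝ (Fin 2))) : SimpleGraph P where
  Adj p q := p ≠ q ∧ dist (p : EuclideanSpace ℝ (Fin 2)) (q : EuclideanSpace ℝ (Fin 2)) ≤ 1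
  symm := by
    constructor
    intro p q h
    exact ⟨h.1.symm, by rw [dist_comm]; exact h.2⟩
  loopless := by
    constructor
    intro p h
    exact h.1 rfl

namespace IsLDSOn

variable {V : Type*} {G : SimpleGraph V} {A D : Set V}

theorem mono_left {A' : Set V} (hD : IsLDSOn G A D) (hA : A' ⊆ A) : IsLDSOn G A' D :=
  ⟨fun v hv => hD.1 v (hA hv), fun u hu v hv huv => hD.2 u (hA hu) v (hA hv) huv⟩

theorem inter_of_closedNbhd_subset {B : Set V} (hD : IsLDSOn G A D)
    (hB : ∀ v ∈ A, closedNbhd G v ⊆ B) : IsLDSOn G A (D ∩ B) := by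
  have inter_eq {N : Set V} (hN : N ⊆ B) : N ∩ (D ∩ B) = N ∩ D := by
    rw [Set.inter_comm D B, ← Set.inter_assoc, Set.inter_eq_left.2 hN]
  refine ⟨fun v hv => ?_, fun u hu v hv huv => ?_⟩
  · rw [inter_eq (hB v hv)]
    exact hD.1 v hv
  · rw [inter_eq (Set.union_subset (hB u hu) (hB v hv))]
    exact hD.2 u hu v hv huv

end IsLDSOn

theorem reachable_and_dist_le_two_of_mem_closedNbhd {V : Type*} (G : SimpleGraph V) {u v : V}
    (h : u ∈ closedNbhd G v) : G.Reachable u v ∧ G.dist u v ≤ 2 := by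
  rcases h with rfl | hadj
  · simp
  · exact ⟨hadj.reachable, by simp [SimpleGraph.dist_eq_one_iff_adj.2 hadj]⟩

theorem lds_inter_two_ball_is_lds_on_general
    {V : Type*} (G : SimpleGraph V)
    (D : Set V) (hD : IsLDS G D) (S : Set V) :
    IsLDSOn G S
      (D ∩ {u | ∃ v ∈ S, G.Reachable u v ∧ G.dist u v ≤ 2}) :=
  (hD.mono_left (Set.subset_univ S)).inter_of_closedNbhd_subset fun v hv _ hu =>
    ⟨v, hv, reachable_and_dist_le_two_of_mem_closedNbhd G hu⟩

theorem lds_inter_two_ball_is_lds_on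
    {V : Type*} [Fintype V] (G : SimpleGraph V)
    (D : Set V) (hD : IsLDS G D) (S : Set V) :
    IsLDSOn G S
      (D ∩ {u | ∃ v ∈ S, G.Reachable u v ∧ G.dist u v ≤ 2}) :=
  lds_inter_two_ball_is_lds_on_general G D hD S
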